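/- arXiv:0805.1257 — 2 statements merged into one kernel-verified Lean document; each statement's English description precedes it below -/
import Mathlib

section
/- Let T be a finite set with |T| = n ≥ 1, let w ≥ 1 be a natural number, and let P_1, …, P_w be independent, identically distributed random subsets of T on a probability space (Ω, 𝓕, Pr) with 𝔼[|P_1|] = m, where 0 ≤ m ≤ n. Then the expected number of elements of T left uncovered satisfies 𝔼[|T \ (P_1 ∪ ⋯ ∪ P_w)|] ≥ n · (1 − m/n)^w. -/
open MeasureTheory ProbabilityTheory Finset

/-!
Linearity of expectation turns the expected number of uncovered points into
`∑ τ, Pr[τ ∉ P i for all i]`. By independence and identical distribution each summand is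
`(1 - q τ) ^ w`, where `q τ = Pr[τ ∈ P 0]` and `∑ τ, q τ = 𝔼|P 0| = m`. Convexity of
`x ↦ x ^ w` on `[0, ∞)` (the power-mean inequality) then bounds the sum below by
`n ((n - m) / n) ^ w`.
-/

lemma card_mul_pow_sum_div_card_le_sum_pow {ι : Type*} (s : Finset ι) {f : ι → ℝ}
    (hf : ∀ i ∈ s, 0 ≤ f i) (k : ℕ) :
    #s * ((∑ i ∈ s, f i) / #s) ^ k ≤ ∑ i ∈ s, f i ^ k := by
  obtain rfl | hs := s.eq_empty_or_nonempty
  · simp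
  cases k with
  | zero => simp
  | succ k =>
    have hcard : (#s : ℝ) ≠ 0 := by exact_mod_cast hs.card_pos.ne'
    calc (#s : ℝ) * ((∑ i ∈ s, f i) / #s) ^ (k + 1)
        = (∑ i ∈ s, f i) ^ (k + 1) / #s ^ k := by rw [div_pow, pow_succ (#s : ℝ)]; field_simp
      _ ≤ ∑ i ∈ s, f i ^ (k + 1) := pow_sum_div_card_le_sum_pow hf k

section

variable {Ω : Type*} [MeasurableSpace Ω] {μ : Measure Ω}

lemma integral_card_filter_univ [IsFiniteMeasure μ] {ι : Type*} [Fintype ι]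
    (p : ι → Ω → Prop) [∀ i ω, Decidable (p i ω)] (hp : ∀ i, MeasurableSet {ω | p i ω}) :
    ∫ ω, (#{i | p i ω} : ℝ) ∂μ = ∑ i, μ.real {ω | p i ω} := by
  have hcard : ∀ ω, (#{i | p i ω} : ℝ) = ∑ i, {ω | p i ω}.indicator 1 ω := by
    intro ω
    simp only [natCast_card_filter, Set.indicator_apply, Set.mem_ofPred_eq, Pi.one_apply]
  simp_rw [hcard]
  rw [integral_finsetSum _ fun i _ => (integrable_const 1).indicator (hp i)]
  exact Finset.sum_congr rfl fun i _ => integral_indicator_one (hp i)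

lemma ProbabilityTheory.iIndepFun.measureReal_forall_mem_eq_pow {ι β : Type*} [Fintype ι]
    [MeasurableSpace β] {X : ι → Ω → β} (hindep : iIndepFun X μ) {i₀ : ι}
    (hident : ∀ i, IdentDistrib (X i) (X i₀) μ μ) {S : Set β} (hS : MeasurableSet S) :
    μ.real {ω | ∀ i, X i ω ∈ S} = μ.real (X i₀ ⁻¹' S) ^ Fintype.card ι := by
  have hinter : {ω | ∀ i, X i ω ∈ S} = ⋂ i, X i ⁻¹' S := by ext; simp
  rw [hinter, measureReal_def, hindep.meas_iInter fun i => ⟨S, hS, rfl⟩]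
  simp_rw [fun i => (hident i).measure_mem_eq hS]
  rw [Finset.prod_const, Finset.card_univ, ENNReal.toReal_pow, measureReal_def]

end

theorem expected_uncovered_ge_general
    (Ω : Type*) [MeasurableSpace Ω] (μ : Measure Ω) [IsProbabilityMeasure μ]
    (T : Type*) [Fintype T] [DecidableEq T]
    [MeasurableSpace (Finset T)] [MeasurableSingletonClass (Finset T)]
    (n : ℕ) (hn : Fintype.card T = n)
    (w : ℕ) (hw : 1 ≤ w)
    (P : Fin w → Ω → Finset T)
    (hmeas : ∀ i, Measurable (P i))
    (hindep : iIndepFun P μ)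
    (hident : ∀ i, IdentDistrib (P i) (P ⟨0, hw⟩) μ μ)
    (m : ℝ)
    (hmean : ∫ ω, ((P ⟨0, hw⟩ ω).card : ℝ) ∂μ = m) :
    (n : ℝ) * (1 - m / n) ^ w
      ≤ ∫ ω, ((Finset.univ.filter (fun τ : T => ∀ i, τ ∉ P i ω)).card : ℝ) ∂μ := by
  have hmem : ∀ i τ, MeasurableSet {ω | τ ∈ P i ω} := fun i τ =>
    hmeas i (.of_discrete (s := {s | τ ∈ s}))
  set q : T → ℝ := fun τ => μ.real {ω | τ ∈ P ⟨0, hw⟩ ω}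
  have hsum : ∑ τ, (1 - q τ) = n - m := by
    rw [Finset.sum_sub_distrib, ← integral_card_filter_univ _ (hmem _), ← hmean]
    simp [hn]
  have huncovered : ∀ τ, μ.real {ω | ∀ i, τ ∉ P i ω} = (1 - q τ) ^ w := fun τ =>
    calc μ.real {ω | ∀ i, τ ∉ P i ω}
        = μ.real (P ⟨0, hw⟩ ⁻¹' {s | τ ∉ s}) ^ Fintype.card (Fin w) :=
          hindep.measureReal_forall_mem_eq_pow hident (S := {s | τ ∉ s}) .of_discrete
      _ = (1 - q τ) ^ w := by
          rw [Fintype.card_fin]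
          exact congrArg (· ^ w) (probReal_compl_eq_one_sub (hmem _ τ))
  rw [integral_card_filter_univ _ fun τ => by
    rw [Set.ofPred_forall]; exact .iInter fun i => (hmem i τ).compl]
  simp_rw [huncovered]
  calc (n : ℝ) * (1 - m / n) ^ w
        = #(univ : Finset T) * ((∑ τ, (1 - q τ)) / #univ) ^ w := by
        rcases eq_or_ne (n : ℝ) 0 with h | h
        · simp [h, hn]
        · rw [hsum, card_univ, hn, sub_div, div_self h]
    _ ≤ ∑ τ, (1 - q τ) ^ w :=
        card_mul_pow_sum_div_card_le_sum_pow _ (fun τ _ => sub_nonneg.2 measureReal_le_one) w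

/-- Key probabilistic lower bound: if `P 1, …, P w` are i.i.d. random subsets of a
finite set `T` with `|T| = n ≥ 1` and `𝔼[|P 1|] = m` (`0 ≤ m ≤ n`), then the expected
number of uncovered elements satisfies `𝔼[|T \ (P 1 ∪ ⋯ ∪ P w)|] ≥ n ⬝ (1 − m/n)^w`. -/
theorem expected_uncovered_ge
    (Ω : Type*) [MeasurableSpace Ω] (μ : Measure Ω) [IsProbabilityMeasure μ]
    (T : Type*) [Fintype T] [DecidableEq T]
    [MeasurableSpace (Finset T)] [MeasurableSingletonClass (Finset T)]
    (n : ℕ) (hn : Fintype.card T = n) (hn1 : 1 ≤ n)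
    (w : ℕ) (hw : 1 ≤ w)
    (P : Fin w → Ω → Finset T)
    (hmeas : ∀ i, Measurable (P i))
    (hindep : iIndepFun P μ)
    (hident : ∀ i, IdentDistrib (P i) (P ⟨0, hw⟩) μ μ)
    (m : ℝ) (hm0 : 0 ≤ m) (hmn : m ≤ n)
    (hmean : ∫ ω, ((P ⟨0, hw⟩ ω).card : ℝ) ∂μ = m) :
    (n : ℝ) * (1 - m / n) ^ w
      ≤ ∫ ω, ((Finset.univ.filter (fun τ : T => ∀ i, τ ∉ P i ω)).card : ℝ) ∂μ :=
  expected_uncovered_ge_general Ω μ T n hn w hw P hmeas hindep hident m hmean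
end

section
/- Let t > 0 be a real, let k ≥ 1, and let α_1, …, α_k be reals with 0 < α_i ≤ 1. Define a sequence of reals by T_1 = α_1 t / e and T_{i+1} = T_i · exp(−α_i t / T_i) for 1 ≤ i ≤ k−1, and define a_1 = 1 and a_{i+1} = a_i + (α_i/α_1) · e^{a_i} for 1 ≤ i ≤ k−1. Then T_i > 0 for all i, and T_i = α_1 t · exp(−a_i) for every 1 ≤ i ≤ k. -/
open Real

/-! Writing `T i = c · exp (-a i)` with `c = α 1 · t`, the exponent of the next factor is
`α i · t / T i = (α i / α 1) · exp (a i)`, so one round of the recursion adds exactly this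
amount to the exponent `a i`. -/

theorem mul_exp_neg_mul_exp_neg_div (b c x : ℝ) (hc : c ≠ 0) :
    c * exp (-x) * exp (-b / (c * exp (-x))) = c * exp (-(x + b / c * exp x)) := by
  have hratio : -b / (c * exp (-x)) = -(b / c * exp x) := by
    rw [exp_neg]
    field_simp
  rw [hratio, mul_assoc, ← exp_add, neg_add]

/-- Closed form of the survival recursion underlying the `k`-level bounds: with
`T 1 = α 1 · t / e`, `T (i+1) = T i · exp(−α i · t / T i)`, `a 1 = 1` and
`a (i+1) = a i + (α i / α 1) · e^{a i}`, one has `T i > 0` and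
`T i = α 1 · t · exp(−a i)` for all `1 ≤ i ≤ k`. -/
theorem survival_recursion_closed_form
    (t : ℝ) (ht : 0 < t) (k : ℕ) (hk : 1 ≤ k)
    (α : ℕ → ℝ) (hα : ∀ i, 1 ≤ i → i ≤ k → 0 < α i ∧ α i ≤ 1)
    (T a : ℕ → ℝ)
    (hT1 : T 1 = α 1 * t / Real.exp 1)
    (hTrec : ∀ i, 1 ≤ i → i ≤ k - 1 → T (i + 1) = T i * Real.exp (-(α i * t) / T i))
    (ha1 : a 1 = 1)
    (harec : ∀ i, 1 ≤ i → i ≤ k - 1 → a (i + 1) = a i + (α i / α 1) * Real.exp (a i)) :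
    ∀ i, 1 ≤ i → i ≤ k → 0 < T i ∧ T i = α 1 * t * Real.exp (-(a i)) := by
  have hc : 0 < α 1 * t := mul_pos (hα 1 le_rfl hk).1 ht
  have hclosed : ∀ i, 1 ≤ i → i ≤ k → T i = α 1 * t * exp (-(a i)) := by
    intro i hi
    induction i, hi using Nat.le_induction with
    | base => intro _; rw [hT1, ha1, exp_neg, div_eq_mul_inv]
    | succ n hn ih =>
      intro hnk
      have hn' : n ≤ k - 1 := by omega
      rw [hTrec n hn hn', ih (by omega), harec n hn hn',
        mul_exp_neg_mul_exp_neg_div _ _ _ hc.ne', mul_div_mul_right _ _ ht.ne']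
  intro i hi hik
  rw [hclosed i hi hik]
  exact ⟨by positivity, rfl⟩
end
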